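/- Let f : ℝ^d → ℝ be continuously differentiable and let x ∈ ℝ^d be a critical point of f (∇f(x) = 0) such that f is twice continuously differentiable in a neighborhood of x. If the Hessian matrix H = ∇²f(x) has at least one negative eigenvalue, then x is not p-critical: there exists p > 0 such that ξ_p^f(x) > 0 (indeed, liminf_{σ → 0+} p_f^<(x, σ) > 0). -/

import Mathlib

/-!
Near a saddle point `x` with `D²f(x) v v < 0`, the function `f` decreases strictly along every
short segment `x + t • u` with `u` close to `v`: there `f` is strictly concave and starts with
zero slope. Hence some nonempty open set `B` of directions satisfies `f (x + σ • z) < f x` for all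
`z ∈ B` and `σ ∈ (0, 1]`. As `N(x, σ²I)` is the image of `N(0, I)` under `z ↦ x + σ • z`, the
success probability `p_f^<(x, σ)` is at least `N(0, I)(B) > 0` for all `σ ∈ (0, 1]`.
-/

open MeasureTheory Set Filter

/-- Isotropic Gaussian measure `N(m, σ²I)` on `ℝ^d`, defined by its density
`x ↦ (2π)^{-d/2} σ^{-d} exp(−‖x−m‖²/(2σ²))` w.r.t. Lebesgue measure. -/
noncomputable def gaussES (d : ℕ) (m : EuclideanSpace ℝ (Fin d)) (σ : ℝ) :
    Measure (EuclideanSpace ℝ (Fin d)) :=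
  volume.withDensity fun x =>
    ENNReal.ofReal ((2 * Real.pi) ^ (-(d : ℝ) / 2) * (σ ^ d)⁻¹ *
      Real.exp (-‖x - m‖ ^ 2 / (2 * σ ^ 2)))

/-- Success probability of strict improvement: `p_f^<(m,σ)`. -/
noncomputable def pLt (d : ℕ) (f : EuclideanSpace ℝ (Fin d) → ℝ)
    (m : EuclideanSpace ℝ (Fin d)) (σ : ℝ) : ENNReal :=
  gaussES d m σ {x | f x < f m}

/-- Success probability of weak improvement: `p_f^≤(m,σ)`. -/
noncomputable def pLe (d : ℕ) (f : EuclideanSpace ℝ (Fin d) → ℝ)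
    (m : EuclideanSpace ℝ (Fin d)) (σ : ℝ) : ENNReal :=
  gaussES d m σ {x | f x ≤ f m}

/-- Lower step-size threshold `ξ_p^f(m) = inf {σ > 0 | p_f^<(m,σ) ≤ p}`, with `inf ∅ = ∞`. -/
noncomputable def xiES (d : ℕ) (f : EuclideanSpace ℝ (Fin d) → ℝ) (p : ℝ)
    (m : EuclideanSpace ℝ (Fin d)) : ENNReal :=
  sInf {s : ENNReal | ∃ σ : ℝ, 0 < σ ∧ s = ENNReal.ofReal σ ∧ pLt d f m σ ≤ ENNReal.ofReal p}

/-- Upper step-size threshold `η_p^f(m) = sup {σ > 0 | p_f^≤(m,σ) ≥ p}`, with `sup ∅ = 0`. -/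
noncomputable def etaES (d : ℕ) (f : EuclideanSpace ℝ (Fin d) → ℝ) (p : ℝ)
    (m : EuclideanSpace ℝ (Fin d)) : ENNReal :=
  sSup {s : ENNReal | ∃ σ : ℝ, 0 < σ ∧ s = ENNReal.ofReal σ ∧ ENNReal.ofReal p ≤ pLe d f m σ}

section Descent

theorem lt_of_deriv_zero_of_second_deriv_neg {g g' g'' : ℝ → ℝ} {t : ℝ} (ht : 0 < t)
    (hg : ∀ a ∈ Icc 0 t, HasDerivAt g (g' a) a) (hg' : ∀ a ∈ Icc 0 t, HasDerivAt g' (g'' a) a)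
    (hg'0 : g' 0 = 0) (hg'' : ∀ a ∈ Icc 0 t, g'' a < 0) : g t < g 0 := by
  have hanti' : StrictAntiOn g' (Icc 0 t) :=
    strictAntiOn_of_hasDerivWithinAt_neg (convex_Icc 0 t)
      (fun a ha => (hg' a ha).continuousAt.continuousWithinAt)
      (fun a ha => (hg' a (interior_subset ha)).hasDerivWithinAt)
      (fun a ha => hg'' a (interior_subset ha))
  have hanti : StrictAntiOn g (Icc 0 t) :=
    strictAntiOn_of_hasDerivWithinAt_neg (convex_Icc 0 t)
      (fun a ha => (hg a ha).continuousAt.continuousWithinAt)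
      (fun a ha => (hg a (interior_subset ha)).hasDerivWithinAt)
      (fun a ha => by
        rw [interior_Icc] at ha
        exact hg'0 ▸ hanti' (left_mem_Icc.2 ht.le) (Ioo_subset_Icc_self ha) ha.1)
  exact hanti (left_mem_Icc.2 ht.le) (right_mem_Icc.2 ht.le) ht

variable {E : Type*} [NormedAddCommGroup E] [NormedSpace ℝ E]

/-- `D²f(y) u u` stays negative for `(y, u)` near `(x, v)`. -/
theorem exists_forall_lt_of_fderiv_eq_zero_of_fderiv_fderiv_neg {f : E → ℝ} {x v : E}
    {U : Set E} (hU : U ∈ nhds x) (hf : ContDiffOn ℝ 2 f U) (hx : fderiv ℝ f x = 0)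
    (hv : fderiv ℝ (fderiv ℝ f) x v v < 0) :
    ∃ δ > 0, ∃ ε > 0, ∀ t ∈ Ioo (0 : ℝ) δ, ∀ u ∈ Metric.ball v ε, f (x + t • u) < f x := by
  obtain ⟨s, hsU, hs, hxs⟩ := mem_nhds_iff.1 hU
  have hf2 : ContDiffOn ℝ 2 f s := hf.mono hsU
  have hD2 : ContDiffOn ℝ 1 (fderiv ℝ f) s := hf2.fderiv_of_isOpen hs (by norm_num)
  have hD : ∀ y ∈ s, HasFDerivAt f (fderiv ℝ f y) y := fun y hy =>
    ((hf2.differentiableOn (by norm_num)).differentiableAt (hs.mem_nhds hy)).hasFDerivAt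
  have hDD : ∀ y ∈ s, HasFDerivAt (fderiv ℝ f) (fderiv ℝ (fderiv ℝ f) y) y := fun y hy =>
    ((hD2.differentiableOn one_ne_zero).differentiableAt (hs.mem_nhds hy)).hasFDerivAt
  have hcont : ContinuousAt (fun p : E × E => fderiv ℝ (fderiv ℝ f) p.1 p.2 p.2) (x, v) :=
    have hDDx : ContinuousAt (fderiv ℝ (fderiv ℝ f)) x :=
      (hD2.continuousOn_fderiv_of_isOpen hs le_rfl).continuousAt (hs.mem_nhds hxs)
    ((hDDx.comp continuousAt_fst).clm_apply continuousAt_snd).clm_apply continuousAt_snd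
  have hnhds : ∀ᶠ p : E × E in nhds (x, v),
      p.1 ∈ s ∧ fderiv ℝ (fderiv ℝ f) p.1 p.2 p.2 < 0 :=
    Filter.Eventually.and (continuousAt_fst.preimage_mem_nhds (hs.mem_nhds hxs))
      (hcont (Iio_mem_nhds hv))
  obtain ⟨η, hη, hball⟩ := Metric.mem_nhds_iff.1 hnhds
  refine ⟨η / (‖v‖ + η), by positivity, η, hη, fun t ht u hu => ?_⟩
  rw [Metric.mem_ball, dist_eq_norm] at hu
  have hseg : ∀ a ∈ Icc (0 : ℝ) t,
      x + a • u ∈ s ∧ fderiv ℝ (fderiv ℝ f) (x + a • u) u u < 0 := by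
    intro a ha
    refine hball (show (x + a • u, u) ∈ _ from ?_)
    rw [← ball_prod_same]
    refine ⟨?_, by rwa [Metric.mem_ball, dist_eq_norm]⟩
    have hu' : ‖u‖ < ‖v‖ + η := by linarith [norm_le_insert' u v]
    have ht' : t * (‖v‖ + η) < η := (lt_div_iff₀ (by positivity)).1 ht.2
    rw [Metric.mem_ball, dist_eq_norm, add_sub_cancel_left, norm_smul, Real.norm_of_nonneg ha.1]
    nlinarith [norm_nonneg u, ha.1, ha.2]
  have hline : ∀ a : ℝ, HasDerivAt (fun a : ℝ => x + a • u) u a := fun a => by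
    simpa using ((hasDerivAt_id a).smul_const u).const_add x
  refine (lt_of_deriv_zero_of_second_deriv_neg (g := fun a => f (x + a • u)) ht.1
    (fun a ha => (hD _ (hseg a ha).1).comp_hasDerivAt a (hline a))
    (fun a ha => (ContinuousLinearMap.apply ℝ ℝ u).hasFDerivAt.comp_hasDerivAt a
      ((hDD _ (hseg a ha).1).comp_hasDerivAt a (hline a)))
    (by simp [hx]) (fun a ha => (hseg a ha).2)).trans_eq (by simp)

/-- The ball `B(δ/2 • v, δ/2 • ε)` lies in the cone `(0, δ) • B(v, ε)`, which is stable under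
shrinking. -/
theorem exists_isOpen_forall_smul_lt_of_fderiv_fderiv_neg {f : E → ℝ} {x v : E}
    {U : Set E} (hU : U ∈ nhds x) (hf : ContDiffOn ℝ 2 f U) (hx : fderiv ℝ f x = 0)
    (hv : fderiv ℝ (fderiv ℝ f) x v v < 0) :
    ∃ B : Set E, IsOpen B ∧ B.Nonempty ∧ ∀ σ ∈ Ioc (0 : ℝ) 1, ∀ z ∈ B, f (x + σ • z) < f x := by
  obtain ⟨δ, hδ, ε, hε, hdesc⟩ :=
    exists_forall_lt_of_fderiv_eq_zero_of_fderiv_fderiv_neg hU hf hx hv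
  refine ⟨Metric.ball ((δ / 2) • v) (δ / 2 * ε), Metric.isOpen_ball,
    Metric.nonempty_ball.2 (by positivity), fun σ hσ z hz => ?_⟩
  have hz' : (2 / δ) • z ∈ Metric.ball v ε := by
    rw [Metric.mem_ball, dist_eq_norm] at hz ⊢
    have : (2 / δ) • z - v = (2 / δ) • (z - (δ / 2) • v) := by
      rw [smul_sub, smul_smul]; field_simp; simp
    rw [this, norm_smul, Real.norm_of_nonneg (by positivity)]
    calc 2 / δ * ‖z - (δ / 2) • v‖ < 2 / δ * (δ / 2 * ε) := by gcongr
      _ = ε := by field_simp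
  have hσz : σ • z = (σ * (δ / 2)) • (2 / δ) • z := by
    rw [smul_smul]; field_simp
  rw [hσz]
  exact hdesc _ ⟨by nlinarith [hσ.1], by nlinarith [hσ.2]⟩ _ hz'

end Descent

section Gaussian

noncomputable def gaussDensity (d : ℕ) (m : EuclideanSpace ℝ (Fin d)) (σ : ℝ)
    (y : EuclideanSpace ℝ (Fin d)) : ℝ :=
  (2 * Real.pi) ^ (-(d : ℝ) / 2) * (σ ^ d)⁻¹ * Real.exp (-‖y - m‖ ^ 2 / (2 * σ ^ 2))

variable {d : ℕ}

theorem gaussES_eq_withDensity (m : EuclideanSpace ℝ (Fin d)) (σ : ℝ) :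
    gaussES d m σ = volume.withDensity fun y => ENNReal.ofReal (gaussDensity d m σ y) := rfl

theorem measurable_gaussDensity (m : EuclideanSpace ℝ (Fin d)) (σ : ℝ) :
    Measurable (gaussDensity d m σ) := by
  unfold gaussDensity; fun_prop

theorem pow_mul_gaussDensity_add_smul (m : EuclideanSpace ℝ (Fin d)) {σ : ℝ} (hσ : 0 < σ)
    (z : EuclideanSpace ℝ (Fin d)) :
    σ ^ d * gaussDensity d m σ (m + σ • z) = gaussDensity d 0 1 z := by
  simp only [gaussDensity, add_sub_cancel_left, sub_zero, norm_smul, Real.norm_of_nonneg hσ.le,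
    one_pow, inv_one, mul_one, mul_pow]
  field_simp

theorem map_volume_add_smul (m : EuclideanSpace ℝ (Fin d)) {σ : ℝ} (hσ : 0 < σ) :
    (volume : Measure (EuclideanSpace ℝ (Fin d))).map (fun z => m + σ • z) =
      ENNReal.ofReal (σ ^ d)⁻¹ • volume := by
  have : (fun z : EuclideanSpace ℝ (Fin d) => m + σ • z) = (m + ·) ∘ (σ • ·) := rfl
  rw [this, ← Measure.map_map (measurable_const_add m) (measurable_const_smul σ),
    Measure.map_addHaar_smul _ hσ.ne', Measure.map_smul, map_add_left_eq_self,
    finrank_euclideanSpace_fin, abs_of_pos (by positivity)]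

theorem gaussES_eq_map (m : EuclideanSpace ℝ (Fin d)) {σ : ℝ} (hσ : 0 < σ) :
    gaussES d m σ = (gaussES d 0 1).map (fun z => m + σ • z) := by
  have hA : Measurable fun z : EuclideanSpace ℝ (Fin d) => m + σ • z := by fun_prop
  ext s hs
  rw [Measure.map_apply hA hs, gaussES_eq_withDensity, gaussES_eq_withDensity,
    withDensity_apply _ hs, withDensity_apply _ (hA hs)]
  have hσd : 0 < σ ^ d := by positivity
  calc ∫⁻ y in s, ENNReal.ofReal (gaussDensity d m σ y)
      = ENNReal.ofReal (σ ^ d) * ∫⁻ y in s, ENNReal.ofReal (gaussDensity d m σ y)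
          ∂(volume.map fun z => m + σ • z) := by
        rw [map_volume_add_smul m hσ, Measure.restrict_smul, lintegral_smul_measure, smul_eq_mul,
          ← mul_assoc, ← ENNReal.ofReal_mul hσd.le, mul_inv_cancel₀ hσd.ne', ENNReal.ofReal_one,
          one_mul]
    _ = ∫⁻ z in (fun z => m + σ • z) ⁻¹' s, ENNReal.ofReal (gaussDensity d 0 1 z) := by
        rw [setLIntegral_map hs (measurable_gaussDensity m σ).ennreal_ofReal hA,
          ← lintegral_const_mul' _ _ ENNReal.ofReal_ne_top]
        simp_rw [← ENNReal.ofReal_mul hσd.le, pow_mul_gaussDensity_add_smul m hσ]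

instance (d : ℕ) : IsFiniteMeasure (gaussES d 0 1) := by
  refine isFiniteMeasure_withDensity_ofReal (Integrable.hasFiniteIntegral ?_)
  have hint : Integrable fun z : EuclideanSpace ℝ (Fin d) => Real.exp (-(1 / 2) * ‖z‖ ^ 2) :=
    Integrable.of_integral_ne_zero <| by
      rw [GaussianFourier.integral_rexp_neg_mul_sq_norm one_half_pos]; positivity
  refine (hint.const_mul ((2 * Real.pi) ^ (-(d : ℝ) / 2))).congr (ae_of_all _ fun z => ?_)
  simp only [sub_zero, one_pow, inv_one, mul_one]
  ring_nf

theorem gaussES_pos_of_isOpen (m : EuclideanSpace ℝ (Fin d)) {σ : ℝ} (hσ : 0 < σ)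
    {s : Set (EuclideanSpace ℝ (Fin d))} (hs : IsOpen s) (hne : s.Nonempty) :
    0 < gaussES d m σ s := by
  rw [pos_iff_ne_zero, gaussES_eq_withDensity, Ne,
    withDensity_apply_eq_zero' (measurable_gaussDensity m σ).ennreal_ofReal.aemeasurable]
  have hpos : ∀ y, ENNReal.ofReal (gaussDensity d m σ y) ≠ 0 := fun y => by
    rw [Ne, ENNReal.ofReal_eq_zero, not_le]
    unfold gaussDensity
    positivity
  simpa [hpos] using hs.measure_ne_zero volume hne

theorem pLt_eq_gaussES (f : EuclideanSpace ℝ (Fin d) → ℝ) (m : EuclideanSpace ℝ (Fin d))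
    {σ : ℝ} (hσ : 0 < σ) : pLt d f m σ = gaussES d 0 1 {z | f (m + σ • z) < f m} := by
  rw [pLt, gaussES_eq_map m hσ]
  exact ((measurableEmbedding_addLeft m).comp (measurableEmbedding_const_smul₀ hσ.ne')).map_apply
    _ _

end Gaussian

section Threshold

variable {d : ℕ} {f : EuclideanSpace ℝ (Fin d) → ℝ} {m : EuclideanSpace ℝ (Fin d)}

theorem ofReal_le_xiES {p c : ℝ} (h : ∀ σ ∈ Ioo 0 c, ENNReal.ofReal p < pLt d f m σ) :
    ENNReal.ofReal c ≤ xiES d f p m := by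
  refine le_sInf ?_
  rintro _ ⟨σ, hσ, rfl, hle⟩
  refine ENNReal.ofReal_le_ofReal (not_lt.1 fun hσc => ?_)
  exact (h σ ⟨hσ, hσc⟩).not_ge hle

theorem liminf_pLt_toReal_pos {κ : ENNReal} (hκ : 0 < κ)
    (h : ∀ᶠ σ in nhdsWithin 0 (Ioi 0), κ ≤ pLt d f m σ) :
    0 < liminf (fun σ : ℝ => (pLt d f m σ).toReal) (nhdsWithin 0 (Ioi 0)) := by
  have hbdd : ∀ᶠ σ in nhdsWithin (0 : ℝ) (Ioi 0), pLt d f m σ ≤ gaussES d 0 1 univ :=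
    eventually_mem_nhdsWithin.mono fun σ hσ => by
      rw [pLt_eq_gaussES f m hσ]; exact measure_mono (subset_univ _)
  have hκtop : κ ≠ ⊤ := (h.and hbdd).exists.elim fun σ hσ =>
    ne_top_of_le_ne_top (measure_ne_top _ _) (hσ.1.trans hσ.2)
  have hcobdd : IsCoboundedUnder (· ≥ ·) (nhdsWithin 0 (Ioi 0))
      fun σ : ℝ => (pLt d f m σ).toReal :=
    isCoboundedUnder_ge_of_eventually_le _
      (hbdd.mono fun σ hσ => ENNReal.toReal_mono (measure_ne_top _ _) hσ)
  refine (ENNReal.toReal_pos hκ.ne' hκtop).trans_le (le_liminf_of_le hcobdd ?_)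
  exact (h.and hbdd).mono fun σ hσ =>
    ENNReal.toReal_mono (ne_top_of_le_ne_top (measure_ne_top _ _) hσ.2) hσ.1

end Threshold

theorem saddle_point_not_critical_general
    (d : ℕ)
    (f : EuclideanSpace ℝ (Fin d) → ℝ)
    (x : EuclideanSpace ℝ (Fin d)) (hx : gradient f x = 0)
    (U : Set (EuclideanSpace ℝ (Fin d))) (hU : U ∈ nhds x) (hf2 : ContDiffOn ℝ 2 f U)
    (v : EuclideanSpace ℝ (Fin d)) (hv : iteratedFDeriv ℝ 2 f x ![v, v] < 0) :
    (∃ p : ℝ, 0 < p ∧ 0 < xiES d f p x) ∧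
    0 < Filter.liminf (fun σ : ℝ => (pLt d f x σ).toReal) (nhdsWithin 0 (Ioi 0)) := by
  have hfx : fderiv ℝ f x = 0 := by rw [← toDual_gradient, hx, map_zero]
  rw [iteratedFDeriv_two_apply] at hv
  obtain ⟨B, hBo, hBne, hB⟩ :=
    exists_isOpen_forall_smul_lt_of_fderiv_fderiv_neg hU hf2 hfx (by simpa using hv)
  set κ := gaussES d 0 1 B
  have hκ : 0 < κ := gaussES_pos_of_isOpen 0 one_pos hBo hBne
  have hlower : ∀ σ ∈ Ioc (0 : ℝ) 1, κ ≤ pLt d f x σ := fun σ hσ => by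
    rw [pLt_eq_gaussES f x hσ.1]
    exact measure_mono fun z hz => hB σ hσ z hz
  have hκ' : 0 < κ.toReal := ENNReal.toReal_pos hκ.ne' (measure_ne_top _ _)
  refine ⟨⟨κ.toReal / 2, half_pos hκ', ?_⟩, liminf_pLt_toReal_pos hκ ?_⟩
  · have hp : ENNReal.ofReal (κ.toReal / 2) < κ := by
      rw [ENNReal.ofReal_lt_iff_lt_toReal (half_pos hκ').le (measure_ne_top _ _)]
      exact half_lt_self hκ'
    refine lt_of_lt_of_le (by simp) (ofReal_le_xiES (c := 1) fun σ hσ => ?_)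
    exact hp.trans_le (hlower σ (Ioo_subset_Ioc_self hσ))
  · exact Filter.mem_of_superset (Ioc_mem_nhdsGT zero_lt_one) hlower

/-- Let `x` be a critical point of a continuously differentiable `f`
which is twice continuously differentiable in a neighborhood of `x`. If the Hessian
at `x` has a negative eigenvalue (witnessed by a direction `v` with negative second
derivative), then `x` is not `p`-critical: the success probability stays bounded away
from zero as `σ → 0⁺`, and `ξ_p^f(x) > 0` for some `p > 0`. -/
theorem saddle_point_not_critical
    (d : ℕ) (hd : 1 ≤ d)
    (f : EuclideanSpace ℝ (Fin d) → ℝ) (hf : ContDiff ℝ 1 f)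
    (x : EuclideanSpace ℝ (Fin d)) (hx : gradient f x = 0)
    (U : Set (EuclideanSpace ℝ (Fin d))) (hU : U ∈ nhds x) (hf2 : ContDiffOn ℝ 2 f U)
    (v : EuclideanSpace ℝ (Fin d)) (hv : iteratedFDeriv ℝ 2 f x ![v, v] < 0) :
    (∃ p : ℝ, 0 < p ∧ 0 < xiES d f p x) ∧
    0 < Filter.liminf (fun σ : ℝ => (pLt d f x σ).toReal) (nhdsWithin 0 (Ioi 0)) :=
  saddle_point_not_critical_general d f x hx U hU hf2 v hv
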